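/- arXiv:1401.6997 — 2 statements merged into one kernel-verified Lean document; each statement's English description precedes it below -/
import Mathlib

section
/- Let d ≥ 2 be even, q an odd prime power, χ a nontrivial additive character of F_q, and η the quadratic character. Let C = {x ∈ F_q^{d+1} : x_1² + ... + x_{d-1}² = x_d x_{d+1}}. Then for every m = (m', m_d, m_{d+1}) ∈ F_q^{d+1}, one has |C|^{-1} Σ_{x ∈ C} χ(m·x) = δ_0(m) + q^{-d} G_1^{d-1} Σ_{t ∈ F_q^*} η(t) χ((‖m'‖² − 4 m_d m_{d+1})/(−4t)), where ‖m'‖² = m_1² + ... + m_{d-1}², G_1 is the Gauss sum, and δ_0(m) = 1 if m = 0 and 0 otherwise. -/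
/-!
Detect `C` by orthogonality of `χ`: `q · Σ_{x ∈ C} χ(m·x) = Σ_t Σ_x χ(t Q(x) + m·x)` with
`Q(x) = x₁² + ⋯ + x_{d-1}² - x_d x_{d+1}`. The term `t = 0` is `q^{d+1} δ₀(m)`. For `t ≠ 0` the
sum over `x` splits into `d - 1` one-variable sums `Σ_z χ(t z² + b z) = η(t) G₁ χ(-b²/4t)`
(complete the square) and one sum over the hyperbolic plane,
`Σ_{a,b} χ(-t a b + u a + v b) = q χ(u v / t)`. Since `d - 1` is odd, `η(t)^{d-1} = η(t)`.
Taking `m = 0` and using `Σ_{t ≠ 0} η(t) = 0` gives `|C| = q^d`.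
-/

open Finset

namespace AddChar

section
variable {ι A M : Type*} [AddCommMonoid A] [CommMonoid M]

lemma map_sum_eq_prod (ψ : AddChar A M) (s : Finset ι) (f : ι → A) :
    ψ (∑ i ∈ s, f i) = ∏ i ∈ s, ψ (f i) :=
  map_prod ψ.toMonoidHom (fun i => Multiplicative.ofAdd (f i)) s

end

variable {A R : Type*} [AddCommMonoid A] [CommSemiring R] (ψ : AddChar A R)

lemma sum_prod_map_add {α β : Type*} [Fintype α] [Fintype β] (f : α → A) (g : β → A) :
    ∑ x : α × β, ψ (f x.1 + g x.2) = (∑ a, ψ (f a)) * ∑ b, ψ (g b) := by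
  simp only [map_add_eq_mul, Fintype.sum_prod_type, Finset.sum_mul_sum]

lemma sum_pi_map_sum {ι α : Type*} [Fintype ι] [DecidableEq ι] [Fintype α] (f : ι → α → A) :
    ∑ y : ι → α, ψ (∑ i, f i (y i)) = ∏ i, ∑ a, ψ (f i a) := by
  simp only [map_sum_eq_prod, Fintype.prod_sum]

end AddChar

lemma four_ne_zero_of_ringChar_ne_two {F : Type*} [Field F] (hF : ringChar F ≠ 2) :
    (4 : F) ≠ 0 := by
  simpa [show (4 : F) = 2 ^ 2 by norm_num] using Ring.two_ne_zero hF

section FiniteField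

variable {F R : Type*} [Field F] [Fintype F] [DecidableEq F] [CommRing R]

local notation "q" => (Fintype.card F : R)
local notation "η" => MulChar.ringHomComp (quadraticChar F) (Int.castRingHom R)

lemma quadraticChar_ringHomComp_mul_self {t : F} (ht : t ≠ 0) : η t * η t = 1 := by
  rw [← map_mul, ← sq, MulChar.ringHomComp_apply, quadraticChar_sq_one' ht, map_one]

variable [IsDomain R] {ψ : AddChar F R}

namespace AddChar

lemma sum_mul_eq_ite (hψ : ψ ≠ 1) (c : F) :
    ∑ x, ψ (c * x) = if c = 0 then q else 0 := by
  simp_rw [mul_comm c, AddChar.sum_mulShift c (AddChar.IsPrimitive.of_ne_one hψ)]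
  split_ifs <;> simp

lemma card_mul_sum_filter_eq_sum_sum {α : Type*} [Fintype α] (hψ : ψ ≠ 1) (Q L : α → F) :
    q * ∑ x ∈ univ.filter (fun x => Q x = 0), ψ (L x) = ∑ t, ∑ x, ψ (t * Q x + L x) := by
  rw [Finset.sum_comm, Finset.mul_sum, Finset.sum_filter]
  refine Finset.sum_congr rfl fun x _ => ?_
  simp only [map_add_eq_mul, ← Finset.sum_mul]
  simp_rw [mul_comm _ (Q x), sum_mul_eq_ite hψ, ite_mul, zero_mul]

lemma sum_mul_sq (hF : ringChar F ≠ 2) (hψ : ψ ≠ 1) {t : F} (ht : t ≠ 0) :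
    ∑ x, ψ (t * x ^ 2) = η t * gaussSum η ψ := by
  have hfiber : ∑ x, ψ (t * x ^ 2) = ∑ y, (η y + 1) * ψ (t * y) := by
    rw [← Finset.sum_fiberwise univ (· ^ 2)]
    refine Finset.sum_congr rfl fun y _ => ?_
    rw [Finset.sum_congr rfl fun x hx => by rw [(Finset.mem_filter.mp hx).2], sum_const,
      nsmul_eq_mul]
    congr 1
    have hcard := quadraticChar_card_sqrts hF y
    rw [Set.toFinset_ofPred] at hcard
    rw [MulChar.ringHomComp_apply, eq_intCast, ← Int.cast_natCast, hcard, Int.cast_add,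
      Int.cast_one]
  have hshift := gaussSum_mulShift η ψ (Units.mk0 t ht)
  rw [Units.val_mk0] at hshift
  rw [hfiber, ← hshift, ← mul_assoc, quadraticChar_ringHomComp_mul_self ht, one_mul, gaussSum]
  simp only [add_mul, one_mul, Finset.sum_add_distrib, sum_mul_eq_ite hψ, if_neg ht, add_zero,
    mulShift_apply]

lemma sum_mul_sq_add_mul (hF : ringChar F ≠ 2) (hψ : ψ ≠ 1) {t : F} (ht : t ≠ 0) (b : F) :
    ∑ x, ψ (t * x ^ 2 + b * x) = η t * gaussSum η ψ * ψ (-b ^ 2 / (4 * t)) := by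
  have h2 : (2 : F) ≠ 0 := Ring.two_ne_zero hF
  have h4 := four_ne_zero_of_ringChar_ne_two hF
  have hsquare (x : F) : t * (x - b / (2 * t)) ^ 2 + b * (x - b / (2 * t))
      = t * x ^ 2 + -b ^ 2 / (4 * t) := by
    field_simp
    ring
  rw [← (Equiv.subRight (b / (2 * t))).sum_comp]
  simp only [Equiv.subRight_apply, hsquare, map_add_eq_mul, ← Finset.sum_mul,
    sum_mul_sq hF hψ ht]

lemma sum_sum_mul_mul_add (hψ : ψ ≠ 1) {t : F} (ht : t ≠ 0) (u v : F) :
    ∑ a, ∑ b, ψ (t * (a * b) + u * a + v * b) = q * ψ (-(u * v) / t) := by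
  have hroot (b : F) : t * b + u = 0 ↔ b = -u / t := by
    rw [eq_div_iff ht, mul_comm, add_eq_zero_iff_eq_neg]
  have hinner (b : F) : ∑ a, ψ (t * (a * b) + u * a + v * b)
      = (if b = -u / t then q else 0) * ψ (v * b) := by
    simp only [← hroot, ← sum_mul_eq_ite hψ, Finset.sum_mul, ← map_add_eq_mul]
    exact Finset.sum_congr rfl fun a _ => congrArg ψ (by ring)
  rw [Finset.sum_comm]
  simp only [hinner, ite_mul, zero_mul, Finset.sum_ite_eq', Finset.mem_univ, if_true]
  congr 2
  ring

end AddChar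

variable {n : ℕ}

def coneForm (x : (Fin n → F) × F × F) : F :=
  ∑ i, x.1 i ^ 2 - x.2.1 * x.2.2

def conePairing (m x : (Fin n → F) × F × F) : F :=
  ∑ i, m.1 i * x.1 i + m.2.1 * x.2.1 + m.2.2 * x.2.2

lemma sum_addChar_conePairing (hψ : ψ ≠ 1) (m : (Fin n → F) × F × F) :
    ∑ x, ψ (conePairing m x) = if m = 0 then q ^ (n + 2) else 0 := by
  simp only [conePairing, add_assoc,
    ψ.sum_prod_map_add (fun y : Fin n → F => ∑ i, m.1 i * y i)
      (fun p : F × F => m.2.1 * p.1 + m.2.2 * p.2),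
    ψ.sum_prod_map_add (fun a => m.2.1 * a) (fun b => m.2.2 * b),
    ψ.sum_pi_map_sum (fun i a => m.1 i * a), AddChar.sum_mul_eq_ite hψ, Fintype.prod_ite_zero]
  have hm : m = 0 ↔ (∀ i, m.1 i = 0) ∧ m.2.1 = 0 ∧ m.2.2 = 0 := by
    simp [Prod.ext_iff, funext_iff]
  simp only [hm]
  split_ifs <;> simp_all
  ring

lemma sum_addChar_coneForm_add_conePairing (hF : ringChar F ≠ 2) (hψ : ψ ≠ 1) (hn : Odd n)
    {t : F} (ht : t ≠ 0) (m : (Fin n → F) × F × F) :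
    ∑ x, ψ (t * coneForm x + conePairing m x)
      = q * (gaussSum η ψ ^ n * (η t * ψ ((∑ i, m.1 i ^ 2 - 4 * m.2.1 * m.2.2) / (-4 * t)))) := by
  have hsplit (x : (Fin n → F) × F × F) : t * coneForm x + conePairing m x
      = ∑ i, (t * x.1 i ^ 2 + m.1 i * x.1 i)
        + (-t * (x.2.1 * x.2.2) + m.2.1 * x.2.1 + m.2.2 * x.2.2) := by
    simp only [coneForm, conePairing, Finset.sum_add_distrib, ← Finset.mul_sum]
    ring
  have hηn : η t ^ n = η t := by
    obtain ⟨k, rfl⟩ := hn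
    rw [pow_succ, pow_mul, sq, quadraticChar_ringHomComp_mul_self ht, one_pow, one_mul]
  have hexponent : ∑ i, -m.1 i ^ 2 / (4 * t) + -(m.2.1 * m.2.2) / -t
      = (∑ i, m.1 i ^ 2 - 4 * m.2.1 * m.2.2) / (-4 * t) := by
    have h4 := four_ne_zero_of_ringChar_ne_two hF
    rw [← Finset.sum_div, Finset.sum_neg_distrib]
    field_simp
    ring
  calc ∑ x, ψ (t * coneForm x + conePairing m x)
      = (∏ i, ∑ a, ψ (t * a ^ 2 + m.1 i * a))
          * ∑ a, ∑ b, ψ (-t * (a * b) + m.2.1 * a + m.2.2 * b) := by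
        simp only [hsplit,
          ψ.sum_prod_map_add (fun y : Fin n → F => ∑ i, (t * y i ^ 2 + m.1 i * y i))
            (fun p : F × F => -t * (p.1 * p.2) + m.2.1 * p.1 + m.2.2 * p.2),
          ψ.sum_pi_map_sum (fun i a => t * a ^ 2 + m.1 i * a), Fintype.sum_prod_type]
    _ = (∏ i, η t * gaussSum η ψ * ψ (-m.1 i ^ 2 / (4 * t)))
          * (q * ψ (-(m.2.1 * m.2.2) / -t)) := by
        simp only [ψ.sum_mul_sq_add_mul hF hψ ht, ψ.sum_sum_mul_mul_add hψ (neg_ne_zero.mpr ht)]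
    _ = _ := by
        rw [Finset.prod_mul_distrib, Finset.prod_mul_distrib, Finset.prod_const, Finset.prod_const,
          Finset.card_univ, Fintype.card_fin, hηn, ← AddChar.map_sum_eq_prod, ← hexponent,
          AddChar.map_add_eq_mul]
        ring

lemma sum_cone_addChar_conePairing [CharZero R] (hF : ringChar F ≠ 2) (hψ : ψ ≠ 1)
    (hn : Odd n) (m : (Fin n → F) × F × F) :
    ∑ x ∈ univ.filter (fun x => coneForm x = 0), ψ (conePairing m x)
      = (if m = 0 then q ^ (n + 1) else 0)
        + gaussSum η ψ ^ n * ∑ t ∈ univ.filter (fun t : F => t ≠ 0),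
            η t * ψ ((∑ i, m.1 i ^ 2 - 4 * m.2.1 * m.2.2) / (-4 * t)) := by
  refine mul_left_cancel₀ (Nat.cast_ne_zero.mpr Fintype.card_ne_zero : q ≠ 0) ?_
  rw [ψ.card_mul_sum_filter_eq_sum_sum hψ, ← Finset.add_sum_erase univ _ (mem_univ 0),
    ← Finset.filter_ne', Finset.sum_congr rfl fun t ht =>
      sum_addChar_coneForm_add_conePairing hF hψ hn (Finset.mem_filter.mp ht).2 m]
  simp only [zero_mul, zero_add, sum_addChar_conePairing hψ, ← Finset.mul_sum]
  split_ifs <;> ring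

end FiniteField

theorem fourier_formula_C
    (F : Type) [Field F] [Fintype F] [DecidableEq F]
    (hchar : ringChar F ≠ 2)
    (d : ℕ) (hd2 : 2 ≤ d) (hdeven : Even d)
    (χ : AddChar F ℂ) (hχ : χ ≠ 1)
    (m : (Fin (d - 1) → F) × F × F) :
    (((univ.filter (fun x : (Fin (d - 1) → F) × F × F =>
          ∑ i, (x.1 i) ^ 2 = x.2.1 * x.2.2)).card : ℂ))⁻¹ *
      (∑ x ∈ univ.filter (fun x : (Fin (d - 1) → F) × F × F =>
          ∑ i, (x.1 i) ^ 2 = x.2.1 * x.2.2),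
        χ (∑ i, m.1 i * x.1 i + m.2.1 * x.2.1 + m.2.2 * x.2.2)) =
      (if m = 0 then 1 else 0) +
        ((Fintype.card F : ℂ) ^ d)⁻¹ *
          (∑ s ∈ univ.filter (fun s : F => s ≠ 0),
            ((quadraticChar F s : ℤ) : ℂ) * χ s) ^ (d - 1) *
          ∑ t ∈ univ.filter (fun t : F => t ≠ 0),
            ((quadraticChar F t : ℤ) : ℂ) *
              χ ((∑ i, (m.1 i) ^ 2 - 4 * m.2.1 * m.2.2) / (-4 * t)) := by
  have hn : Odd (d - 1) := Nat.Even.sub_odd (by omega) hdeven odd_one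
  have hcone : univ.filter (fun x : (Fin (d - 1) → F) × F × F => ∑ i, x.1 i ^ 2 = x.2.1 * x.2.2)
      = univ.filter (fun x => coneForm x = 0) := by
    simp only [coneForm, sub_eq_zero]
  have hG : ∑ s ∈ univ.filter (fun s : F => s ≠ 0), ((quadraticChar F s : ℤ) : ℂ) * χ s
      = gaussSum ((quadraticChar F).ringHomComp (Int.castRingHom ℂ)) χ :=
    Finset.sum_filter_of_ne fun s _ hs => by rintro rfl; simp at hs
  have hsum := sum_cone_addChar_conePairing hchar hχ hn
  rw [Nat.sub_add_cancel (by omega)] at hsum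
  have hcard : (#(univ.filter fun x : (Fin (d - 1) → F) × F × F => coneForm x = 0) : ℂ)
      = (Fintype.card F : ℂ) ^ d := by
    have hη : ∑ t ∈ univ.filter (fun t : F => t ≠ 0), ((quadraticChar F t : ℤ) : ℂ) = 0 := by
      rw [Finset.sum_filter_of_ne fun t _ ht => by rintro rfl; simp at ht]
      exact_mod_cast quadraticChar_sum_zero hchar
    simpa [conePairing, hη, -quadraticChar_apply] using hsum 0
  have hm := hsum m
  simp only [conePairing, MulChar.ringHomComp_apply, Int.coe_castRingHom] at hm
  rw [hcone, hcard, hm, hG]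
  have hq : (Fintype.card F : ℂ) ^ d ≠ 0 :=
    pow_ne_zero _ (Nat.cast_ne_zero.mpr Fintype.card_ne_zero)
  field_simp
  split_ifs <;> ring
end

section
/- Let d ≥ 2 be even, q an odd prime power, and C ⊂ F_q^{d+1} the homogeneous variety x_1²+...+x_{d-1}² = x_d x_{d+1}. With K(m) = (dσ_c)^∨(m) − δ_0(m), one has the uniform bound ‖G ∗ K‖_{L^∞(F_q^{d+1})} ≤ q^{−d/2} ‖G‖_{L^1(F_q^{d+1}, counting)} for all G : F_q^{d+1} → ℂ. -/
/-!
Write `Q(y, s, u) = ∑ yᵢ² - s u` and `m = (a, b, c)`. Orthogonality detects the cone: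
`q · ∑_{x ∈ C} ψ(m·x) = ∑_t ∑_x ψ(t Q(x) + m·x)`. For `t ≠ 0` the inner sum splits into
`d - 1` completed-square sums `ψ(-aᵢ²/4t) η(t) g` (with `g` the quadratic Gauss sum) and a
hyperbolic sum `q ψ(bc/t)`; as `d - 1` is odd this is `q g^(d-1) η(t) ψ(e/t)` with
`e = bc - ∑ aᵢ²/4`, and the sum over `t` is one more Gauss sum `η(e) g`. Hence
`∑_{x ∈ C} ψ(m·x) = q^d δ₀(m) + η(e) g^d`, so `|C| = q^d`, `K(m) = q^(-d) η(e) g^d`, and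
`|g| = √q` gives `|K| ≤ q^(-d/2)`, which is all Young's inequality needs.
-/

open Finset

theorem AddChar.map_sum_eq_prod_s12 {A M ι : Type*} [AddCommMonoid A] [CommMonoid M]
    (ψ : AddChar A M) (s : Finset ι) (f : ι → A) :
    ψ (∑ i ∈ s, f i) = ∏ i ∈ s, ψ (f i) :=
  map_prod ψ.toMonoidHom (fun i => Multiplicative.ofAdd (f i)) s

theorem AddChar.sum_apply_sum_add_eq_prod_mul {A R ι : Type*} [AddCommMonoid A] [Fintype A]
    [CommRing R] [Fintype ι] [DecidableEq ι] (ψ : AddChar A R) (f : ι → A → A)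
    (g : A → A → A) :
    ∑ x : (ι → A) × A × A, ψ (∑ i, f i (x.1 i) + g x.2.1 x.2.2) =
      (∏ i, ∑ z, ψ (f i z)) * ∑ s, ∑ u, ψ (g s u) := by
  simp_rw [AddChar.map_add_eq_mul, AddChar.map_sum_eq_prod_s12, Fintype.sum_prod_type,
    Fintype.prod_sum, Finset.sum_mul, Finset.mul_sum]

theorem MulChar.IsQuadratic.norm_le_one {R : Type*} [CommMonoid R] {χ : MulChar R ℂ}
    (hχ : χ.IsQuadratic) (a : R) : ‖χ a‖ ≤ 1 := by
  rcases hχ a with h | h | h <;> simp [h]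

theorem norm_sum_mul_le_of_norm_le {ι 𝕜 : Type*} [Fintype ι] [NonUnitalSeminormedRing 𝕜]
    (G H : ι → 𝕜) {B : ℝ} (hH : ∀ n, ‖H n‖ ≤ B) :
    ‖∑ n, G n * H n‖ ≤ B * ∑ n, ‖G n‖ :=
  calc ‖∑ n, G n * H n‖
      ≤ ∑ n, ‖G n‖ * B := (norm_sum_le _ _).trans <| Finset.sum_le_sum fun n _ =>
        (norm_mul_le _ _).trans (mul_le_mul_of_nonneg_left (hH n) (norm_nonneg _))
    _ = B * ∑ n, ‖G n‖ := by rw [← Finset.sum_mul, mul_comm]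

section GaussSum

variable {F : Type*} [Field F] [Fintype F]

theorem gaussSum_mulShift_of_isQuadratic {R : Type*} [CommRing R] [IsDomain R]
    {η : MulChar F R} (hη : η.IsQuadratic) (hη₁ : η ≠ 1) (ψ : AddChar F R) (e : F) :
    gaussSum η (ψ.mulShift e) = η e * gaussSum η ψ := by
  rcases eq_or_ne e 0 with rfl | he
  · simp [gaussSum, MulChar.sum_eq_zero_of_ne_one hη₁, MulChar.map_zero]
  · simpa [hη.inv] using gaussSum_mulShift_eq η ψ (Units.mk0 e he)

theorem sum_mul_addChar_div_eq_gaussSum {R : Type*} [CommRing R] [IsDomain R]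
    {η : MulChar F R} (hη : η.IsQuadratic) (hη₁ : η ≠ 1) (ψ : AddChar F R) (e : F) :
    ∑ t, η t * ψ (e / t) = η e * gaussSum η ψ := by
  rw [← gaussSum_mulShift_of_isQuadratic hη hη₁]
  refine Fintype.sum_equiv (Equiv.inv F) _ _ fun t => ?_
  rw [Equiv.inv_apply, ← MulChar.inv_apply', hη.inv, AddChar.mulShift_apply, div_eq_mul_inv]

theorem norm_gaussSum_sq {χ : MulChar F ℂ} (hχ : χ ≠ 1) {ψ : AddChar F ℂ}
    (hψ : ψ.IsPrimitive) : ‖gaussSum χ ψ‖ ^ 2 = Fintype.card F := by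
  have h := gaussSum_mul_gaussSum_eq_card hχ hψ
  rw [← star_gaussSum_eq, ← starRingEnd_apply, Complex.mul_conj'] at h
  exact_mod_cast h

theorem norm_gaussSum {χ : MulChar F ℂ} (hχ : χ ≠ 1) {ψ : AddChar F ℂ}
    (hψ : ψ.IsPrimitive) : ‖gaussSum χ ψ‖ = (Fintype.card F : ℝ) ^ (1 / 2 : ℝ) := by
  rw [← Real.sqrt_eq_rpow, ← norm_gaussSum_sq hχ hψ, Real.sqrt_sq (norm_nonneg _)]

end GaussSum

section CharacterSums

variable {F : Type*} [Field F] [Fintype F]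

theorem sum_addChar_cone_phase {n : ℕ} (ψ : AddChar F ℂ) (t : F) (m : (Fin n → F) × F × F) :
    ∑ x : (Fin n → F) × F × F, ψ (t * (∑ i, x.1 i ^ 2 - x.2.1 * x.2.2)) *
        ψ (∑ i, m.1 i * x.1 i + m.2.1 * x.2.1 + m.2.2 * x.2.2) =
      (∏ i, ∑ z, ψ (t * z ^ 2 + m.1 i * z)) *
        ∑ s, ∑ u, ψ (m.2.1 * s + m.2.2 * u - t * (s * u)) := by
  rw [← AddChar.sum_apply_sum_add_eq_prod_mul]
  refine Finset.sum_congr rfl fun x _ => ?_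
  rw [← AddChar.map_add_eq_mul, mul_sub, Finset.mul_sum]
  congr 1
  rw [Finset.sum_add_distrib]
  ring

variable [DecidableEq F]

theorem sum_addChar_mul {ψ : AddChar F ℂ} (hψ : ψ.IsPrimitive) (a : F) :
    ∑ z, ψ (a * z) = if a = 0 then (Fintype.card F : ℂ) else 0 := by
  simp_rw [mul_comm a]
  rw [AddChar.sum_mulShift a hψ, Nat.cast_ite, Nat.cast_zero]

theorem card_mul_sum_filter_eq {α : Type*} [Fintype α] {ψ : AddChar F ℂ} (hψ : ψ.IsPrimitive)
    (f g : α → F) (φ : α → ℂ) :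
    (Fintype.card F : ℂ) * ∑ x ∈ univ.filter (fun x => f x = g x), φ x =
      ∑ t, ∑ x, ψ (t * (f x - g x)) * φ x := by
  rw [Finset.sum_comm, Finset.mul_sum, Finset.sum_filter]
  refine Finset.sum_congr rfl fun x _ => ?_
  simp_rw [← Finset.sum_mul, AddChar.sum_mulShift _ hψ, sub_eq_zero]
  split_ifs <;> simp

theorem sum_sum_addChar_hyperbolic {ψ : AddChar F ℂ} (hψ : ψ.IsPrimitive) {t : F} (ht : t ≠ 0)
    (b c : F) :
    ∑ s, ∑ u, ψ (b * s + c * u - t * (s * u)) = Fintype.card F * ψ (b * c / t) := by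
  have hsplit : ∀ s u, ψ (b * s + c * u - t * (s * u)) = ψ (c * u) * ψ (s * (b - t * u)) :=
    fun s u => by rw [← AddChar.map_add_eq_mul]; ring_nf
  have hsolve : ∀ u, b - t * u = 0 ↔ b / t = u := fun u => by
    rw [sub_eq_zero, div_eq_iff ht, mul_comm, eq_comm]
  rw [Finset.sum_comm]
  simp_rw [hsplit, ← Finset.mul_sum, AddChar.sum_mulShift _ hψ, hsolve, Nat.cast_ite,
    Nat.cast_zero, mul_ite, mul_zero, Finset.sum_ite_eq, if_pos (Finset.mem_univ _)]
  rw [mul_comm, mul_div_assoc', mul_comm c]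

end CharacterSums

section QuadraticChar

variable {F : Type*} [Field F] [Fintype F] [DecidableEq F]

noncomputable def quadraticCharℂ (F : Type*) [Field F] [Fintype F] [DecidableEq F] :
    MulChar F ℂ :=
  (quadraticChar F).ringHomComp (Int.castRingHom ℂ)

theorem isQuadratic_quadraticCharℂ : (quadraticCharℂ F).IsQuadratic :=
  (quadraticChar_isQuadratic F).comp _

theorem quadraticCharℂ_ne_one (hF : ringChar F ≠ 2) : quadraticCharℂ F ≠ 1 :=
  (MulChar.ringHomComp_ne_one_iff Int.cast_injective).mpr (quadraticChar_ne_one hF)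

theorem sum_comp_sq (hF : ringChar F ≠ 2) (f : F → ℂ) :
    ∑ z, f (z ^ 2) = ∑ w, (quadraticCharℂ F w + 1) * f w := by
  rw [← Finset.sum_fiberwise' univ (· ^ 2) f]
  refine Finset.sum_congr rfl fun w _ => ?_
  rw [Finset.sum_const, nsmul_eq_mul]
  congr 1
  have h := quadraticChar_card_sqrts hF w
  rw [Set.toFinset_ofPred] at h
  show _ = ((quadraticChar F w : ℤ) : ℂ) + 1
  exact_mod_cast h

theorem sum_addChar_mul_sq (hF : ringChar F ≠ 2) {ψ : AddChar F ℂ} (hψ : ψ.IsPrimitive)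
    {t : F} (ht : t ≠ 0) :
    ∑ z, ψ (t * z ^ 2) = quadraticCharℂ F t * gaussSum (quadraticCharℂ F) ψ := by
  rw [sum_comp_sq hF (fun w => ψ (t * w)), ← gaussSum_mulShift_of_isQuadratic
    isQuadratic_quadraticCharℂ (quadraticCharℂ_ne_one hF)]
  have hzero : ∑ w, ψ (t * w) = 0 := AddChar.sum_eq_zero_of_ne_one (hψ ht)
  simp_rw [add_mul, one_mul, Finset.sum_add_distrib, hzero, add_zero]
  rfl

theorem sum_addChar_quadratic (hF : ringChar F ≠ 2) {ψ : AddChar F ℂ} (hψ : ψ.IsPrimitive)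
    {t : F} (ht : t ≠ 0) (a : F) :
    ∑ z, ψ (t * z ^ 2 + a * z) =
      ψ (-(a ^ 2 / (4 * t))) * (quadraticCharℂ F t * gaussSum (quadraticCharℂ F) ψ) := by
  have h2 : (2 : F) ≠ 0 := Ring.two_ne_zero hF
  have h4 : (4 : F) ≠ 0 := by simpa [show (4 : F) = 2 * 2 by norm_num] using h2
  rw [← sum_addChar_mul_sq hF hψ ht, Finset.mul_sum]
  refine Fintype.sum_equiv (Equiv.addRight (a / (2 * t))) _ _ fun z => ?_
  rw [← AddChar.map_add_eq_mul, Equiv.coe_addRight]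
  congr 1
  field_simp
  ring

end QuadraticChar

section Cone

variable {F : Type*} [Field F] [Fintype F] [DecidableEq F]

variable (F) in
def cone (n : ℕ) : Finset ((Fin n → F) × F × F) :=
  univ.filter fun x => ∑ i, (x.1 i) ^ 2 = x.2.1 * x.2.2

/-- `-1/4` times the quadratic form dual to `∑ yᵢ² - s u`. -/
def coneDual {n : ℕ} (m : (Fin n → F) × F × F) : F :=
  m.2.1 * m.2.2 - (∑ i, m.1 i ^ 2) / 4

noncomputable def coneFourier (ψ : AddChar F ℂ) (n : ℕ) (m : (Fin n → F) × F × F) : ℂ :=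
  (#(cone F n) : ℂ)⁻¹ * ∑ x ∈ cone F n, ψ (∑ i, m.1 i * x.1 i + m.2.1 * x.2.1 + m.2.2 * x.2.2)

theorem cone_phase_factors_eq_of_eq_zero {n : ℕ} {ψ : AddChar F ℂ} (hψ : ψ.IsPrimitive)
    (m : (Fin n → F) × F × F) :
    (∏ i, ∑ z, ψ (0 * z ^ 2 + m.1 i * z)) *
        ∑ s, ∑ u, ψ (m.2.1 * s + m.2.2 * u - 0 * (s * u)) =
      if m = 0 then (Fintype.card F : ℂ) ^ (n + 2) else 0 := by
  obtain ⟨a, b, c⟩ := m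
  simp only [zero_mul, zero_add, sub_zero, AddChar.map_add_eq_mul, ← Finset.mul_sum,
    ← Finset.sum_mul]
  simp_rw [sum_addChar_mul hψ, Finset.prod_ite_zero, Finset.prod_const, Finset.card_univ,
    Fintype.card_fin]
  simp only [Prod.mk_eq_zero, funext_iff, Pi.zero_apply]
  split_ifs <;> simp_all
  ring

theorem cone_phase_factors_eq_of_ne_zero (hF : ringChar F ≠ 2) {n : ℕ} (hn : Odd n)
    {ψ : AddChar F ℂ} (hψ : ψ.IsPrimitive) {t : F} (ht : t ≠ 0) (m : (Fin n → F) × F × F) :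
    (∏ i, ∑ z, ψ (t * z ^ 2 + m.1 i * z)) *
        ∑ s, ∑ u, ψ (m.2.1 * s + m.2.2 * u - t * (s * u)) =
      Fintype.card F * gaussSum (quadraticCharℂ F) ψ ^ n *
        (quadraticCharℂ F t * ψ (coneDual m / t)) := by
  have h2 : (2 : F) ≠ 0 := Ring.two_ne_zero hF
  have h4 : (4 : F) ≠ 0 := by simpa [show (4 : F) = 2 * 2 by norm_num] using h2
  simp_rw [sum_addChar_quadratic hF hψ ht, sum_sum_addChar_hyperbolic hψ ht]
  rw [Finset.prod_mul_distrib, Finset.prod_const, Finset.card_univ, Fintype.card_fin, mul_pow,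
    ← AddChar.map_sum_eq_prod_s12, ← MulChar.pow_apply' _ hn.pos.ne',
    isQuadratic_quadraticCharℂ.pow_odd hn]
  have hphase :
      ψ (∑ i, -(m.1 i ^ 2 / (4 * t))) * ψ (m.2.1 * m.2.2 / t) = ψ (coneDual m / t) := by
    rw [← AddChar.map_add_eq_mul, coneDual, Finset.sum_neg_distrib, ← Finset.sum_div]
    congr 1
    field_simp
    ring
  rw [← hphase]
  ring

theorem cone_phase_factors_eq (hF : ringChar F ≠ 2) {n : ℕ} (hn : Odd n)
    {ψ : AddChar F ℂ} (hψ : ψ.IsPrimitive) (t : F) (m : (Fin n → F) × F × F) :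
    (∏ i, ∑ z, ψ (t * z ^ 2 + m.1 i * z)) *
        ∑ s, ∑ u, ψ (m.2.1 * s + m.2.2 * u - t * (s * u)) =
      (if t = 0 then if m = 0 then (Fintype.card F : ℂ) ^ (n + 2) else 0 else 0) +
        Fintype.card F * gaussSum (quadraticCharℂ F) ψ ^ n *
          (quadraticCharℂ F t * ψ (coneDual m / t)) := by
  rcases eq_or_ne t 0 with rfl | ht
  · rw [cone_phase_factors_eq_of_eq_zero hψ, if_pos rfl, MulChar.map_zero, zero_mul, mul_zero,
      add_zero]
  · rw [cone_phase_factors_eq_of_ne_zero hF hn hψ ht, if_neg ht, zero_add]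

theorem sum_cone_addChar (hF : ringChar F ≠ 2) {n : ℕ} (hn : Odd n)
    {ψ : AddChar F ℂ} (hψ : ψ.IsPrimitive) (m : (Fin n → F) × F × F) :
    ∑ x ∈ cone F n, ψ (∑ i, m.1 i * x.1 i + m.2.1 * x.2.1 + m.2.2 * x.2.2) =
      (if m = 0 then (Fintype.card F : ℂ) ^ (n + 1) else 0) +
        quadraticCharℂ F (coneDual m) * gaussSum (quadraticCharℂ F) ψ ^ (n + 1) := by
  have hq : (Fintype.card F : ℂ) ≠ 0 := Nat.cast_ne_zero.mpr Fintype.card_ne_zero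
  apply mul_left_cancel₀ hq
  rw [cone, card_mul_sum_filter_eq hψ]
  simp_rw [sum_addChar_cone_phase, cone_phase_factors_eq hF hn hψ]
  rw [Finset.sum_add_distrib, ← Finset.mul_sum, sum_mul_addChar_div_eq_gaussSum
    isQuadratic_quadraticCharℂ (quadraticCharℂ_ne_one hF), Finset.sum_ite_eq' univ (0 : F),
    if_pos (Finset.mem_univ _)]
  split_ifs <;> ring

theorem card_cone (hF : ringChar F ≠ 2) {n : ℕ} (hn : Odd n) :
    #(cone F n) = Fintype.card F ^ (n + 1) := by
  obtain ⟨ψ, hψ1⟩ : ∃ ψ : AddChar F ℂ, ψ 1 ≠ 1 := AddChar.exists_apply_ne_zero.mpr one_ne_zero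
  have hψ : ψ.IsPrimitive := AddChar.IsPrimitive.of_ne_one fun h => hψ1 (by simp [h])
  have h := sum_cone_addChar hF hn hψ 0
  simp [coneDual, MulChar.map_zero] at h
  exact_mod_cast h

theorem coneFourier_eq (hF : ringChar F ≠ 2) {n : ℕ} (hn : Odd n)
    {ψ : AddChar F ℂ} (hψ : ψ.IsPrimitive) (m : (Fin n → F) × F × F) :
    coneFourier ψ n m = (if m = 0 then 1 else 0) +
      ((Fintype.card F : ℂ) ^ (n + 1))⁻¹ *
        (quadraticCharℂ F (coneDual m) * gaussSum (quadraticCharℂ F) ψ ^ (n + 1)) := by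
  have hq : (Fintype.card F : ℂ) ≠ 0 := Nat.cast_ne_zero.mpr Fintype.card_ne_zero
  rw [coneFourier, sum_cone_addChar hF hn hψ, card_cone hF hn, Nat.cast_pow, mul_add]
  split_ifs <;> simp [hq]

theorem norm_coneFourier_sub_indicator_le (hF : ringChar F ≠ 2) {n : ℕ} (hn : Odd n)
    {ψ : AddChar F ℂ} (hψ : ψ.IsPrimitive) (m : (Fin n → F) × F × F) :
    ‖coneFourier ψ n m - if m = 0 then 1 else 0‖ ≤
      (Fintype.card F : ℝ) ^ (-((n : ℝ) + 1) / 2) := by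
  have hq : (0 : ℝ) < Fintype.card F := by exact_mod_cast Fintype.card_pos
  rw [coneFourier_eq hF hn hψ, add_sub_cancel_left, norm_mul, norm_mul, norm_inv, norm_pow,
    norm_pow, Complex.norm_natCast, norm_gaussSum (quadraticCharℂ_ne_one hF) hψ]
  calc ((Fintype.card F : ℝ) ^ (n + 1))⁻¹ *
        (‖quadraticCharℂ F (coneDual m)‖ * ((Fintype.card F : ℝ) ^ (1 / 2 : ℝ)) ^ (n + 1))
      ≤ ((Fintype.card F : ℝ) ^ (n + 1))⁻¹ * ((Fintype.card F : ℝ) ^ (1 / 2 : ℝ)) ^ (n + 1) := by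
        gcongr
        exact mul_le_of_le_one_left (by positivity) (isQuadratic_quadraticCharℂ.norm_le_one _)
    _ = (Fintype.card F : ℝ) ^ (-((n : ℝ) + 1) / 2) := by
        rw [← Real.rpow_natCast, ← Real.rpow_natCast, ← Real.rpow_mul hq.le,
          ← Real.rpow_neg hq.le, ← Real.rpow_add hq]
        push_cast
        ring_nf

end Cone

theorem conv_K_Linfty_bound
    (F : Type) [Field F] [Fintype F] [DecidableEq F]
    (hchar : ringChar F ≠ 2)
    (d : ℕ) (hd2 : 2 ≤ d) (hdeven : Even d)
    (χ : AddChar F ℂ) (hχ : χ ≠ 1)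
    (K : ((Fin (d - 1) → F) × F × F) → ℂ)
    (hK : ∀ m : (Fin (d - 1) → F) × F × F,
      K m = (((univ.filter (fun x : (Fin (d - 1) → F) × F × F =>
                ∑ i, (x.1 i) ^ 2 = x.2.1 * x.2.2)).card : ℂ))⁻¹ *
              (∑ x ∈ univ.filter (fun x : (Fin (d - 1) → F) × F × F =>
                  ∑ i, (x.1 i) ^ 2 = x.2.1 * x.2.2),
                χ (∑ i, m.1 i * x.1 i + m.2.1 * x.2.1 + m.2.2 * x.2.2)) -
            (if m = 0 then 1 else 0))
    (G : ((Fin (d - 1) → F) × F × F) → ℂ)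
    (m : (Fin (d - 1) → F) × F × F) :
    ‖∑ n : (Fin (d - 1) → F) × F × F, G n * K (m - n)‖ ≤
      (Fintype.card F : ℝ) ^ (-(d : ℝ) / 2) *
        ∑ n : (Fin (d - 1) → F) × F × F, ‖G n‖ := by
  have hodd : Odd (d - 1) := Nat.Even.sub_odd (by omega) hdeven odd_one
  have hexp : ((d - 1 : ℕ) : ℝ) + 1 = d := by
    rw [Nat.cast_sub (by omega)]
    ring
  refine norm_sum_mul_le_of_norm_le G _ fun n => ?_
  rw [hK, ← hexp]
  exact norm_coneFourier_sub_indicator_le hchar hodd (AddChar.IsPrimitive.of_ne_one hχ) (m - n)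
end
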